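/- arXiv:1709.10128 — 3 statements merged into one kernel-verified Lean document; each statement's English description precedes it below -/
import Mathlib

section
/- For any number of channels K ≥ 2, any horizon T ≥ K·ln K, any fixed assignment of rewards x_t(j) ∈ [0,1] for t = 1,…,T and j = 1,…,K, and any learning rate η with 0 < η ≤ (ln K/(K²·T))^{1/3}, the expected regret of the POLA algorithm satisfies G_max − E[G_POLA] ≤ (e−2)·η·K·( (3/4)·((T+1)⁴/(K·ln K))^{1/3} + (K·ln K)/4 ) + (ln K)/η + (3/2)·(K·T²·ln K)^{1/3}, where G_max = max_j ∑_{t=1}^T x_t(j) and G_POLA = ∑_{t=1}^T R_t with R_t the reward collected by POLA at round t (R_t = x_t(I_t) if round t is an attack round with attacked channel I_t, and R_t = 0 if round t is an observation round), and the expectation is over the internal randomness of POLA. -/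
/-!
Model of the POLA algorithm.  There are `K` channels and `T` time slots with
rewards `x t j ∈ [0,1]` (round `t+1` of the paper is indexed by
`t ∈ {0,…,T-1}`).  The randomness that influences the evolution of the
weights is, per round, whether the round is an observation round and, in that
case, which channel was observed.  We encode this by a history
`c : Fin T → Option (Fin K)`, where `c t = some j` means round `t` was an
observation round with observed channel `j`, and `c t = none` means round `t`
was an attack round (the attacked channel does not affect the weights).
-/

/-- The POLA observation probability `δ_t = min{1, (K·ln K/t)^{1/3}}` of
round `t+1` (0-based index `t`). -/
noncomputable def polaDelta (K t : ℕ) : ℝ :=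
  min 1 (((K : ℝ) * Real.log K / ((t : ℝ) + 1)) ^ ((1 : ℝ) / 3))

/-- Weights of POLA along a history `c`: `w 0 i = 1`; on an observation round
with observed channel `j'`, `w (t+1) j = w t j · exp(η·x̂ t j)` with
`x̂ t j = x t j · K/δ_t` if `j = j'` and `0` otherwise; on an attack round the
weights are unchanged. -/
noncomputable def polaWeight (K T : ℕ) (x : ℕ → Fin K → ℝ) (η : ℝ)
    (c : Fin T → Option (Fin K)) : ℕ → Fin K → ℝ
  | 0 => fun _ => 1
  | t + 1 => fun j =>
      polaWeight K T x η c t j *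
        Real.exp (η *
          (if h : t < T then
            (match c ⟨t, h⟩ with
             | some j' => if j' = j then x t j * (K : ℝ) / polaDelta K t else 0
             | none => 0)
          else 0))

/-- POLA attack distribution `p t i = w t i / ∑ j, w t j`. -/
noncomputable def polaP (K T : ℕ) (x : ℕ → Fin K → ℝ) (η : ℝ)
    (c : Fin T → Option (Fin K)) (t : ℕ) (i : Fin K) : ℝ :=
  polaWeight K T x η c t i / ∑ j, polaWeight K T x η c t j

/-- Probability of the history `c`: with probability `δ_t` the round is an
observation round and the observed channel is uniform among the `K` channels
(probability `δ_t·(1/K)` for each), and with probability `1 − δ_t` it is an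
attack round. -/
noncomputable def polaHistProb (K T : ℕ) (c : Fin T → Option (Fin K)) : ℝ :=
  ∏ t : Fin T,
    (match c t with
     | some _ => polaDelta K (t : ℕ) * (1 / (K : ℝ))
     | none => 1 - polaDelta K (t : ℕ))

/-- Expected total reward `E[G_POLA] = E[∑_t R_t]`, where `R_t = x t (I_t)`
with `I_t ∼ p_t` on attack rounds and `R_t = 0` on observation rounds: given
a history, the conditional expectation of the reward of an attack round `t`
is `∑ i, p t i · x t i`. -/
noncomputable def polaGain (K T : ℕ) (x : ℕ → Fin K → ℝ) (η : ℝ) : ℝ :=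
  ∑ c : Fin T → Option (Fin K), polaHistProb K T c *
      ∑ t : Fin T,
        (match c t with
         | none => ∑ i, polaP K T x η c (t : ℕ) i * x (t : ℕ) i
         | some _ => 0)

open Finset Real

/-!
Along every history the POLA weights are exponential weights fed with the importance-weighted
estimates `x̂`. Since `η K / δ_t ≤ 1`, the inequality `eᶻ ≤ 1 + z + (e - 2) z²` on `[0, 1]` makes
`log ∑ w` grow by at most `η ⟨p, x̂⟩ + (e - 2) η² ⟨p, x̂²⟩` per round, which bounds `∑ₜ x̂ₜ(j)`
pathwise (the Exp3 potential argument). In expectation `x̂ₜ` is unbiased given the past, so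
`⟨p, x̂⟩` becomes the expected reward of an attack, `⟨p, x̂²⟩` costs at most `K / δ_t`, and
observing loses at most `δ_t` per round. The sums of `δ_t` and `K / δ_t` are then compared with
the integrals of `s^{-1/3}` and `s^{1/3}`.
-/

lemma exp_eq_one_add_add_tsum (y : ℝ) :
    exp y = 1 + y + ∑' n : ℕ, y ^ (n + 2) / (n + 2).factorial := by
  rw [exp_eq_exp_ℝ, NormedSpace.exp_eq_tsum_div]
  beta_reduce
  rw [← (summable_pow_div_factorial y).sum_add_tsum_nat_add 2]
  simp [sum_range_succ]

lemma exp_le_one_add_add_mul_sq {z : ℝ} (h0 : 0 ≤ z) (h1 : z ≤ 1) :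
    exp z ≤ 1 + z + (exp 1 - 2) * z ^ 2 := by
  have hsum (y : ℝ) : Summable fun n : ℕ => y ^ (n + 2) / (n + 2).factorial :=
    (summable_nat_add_iff 2).2 (summable_pow_div_factorial y)
  have htail : ∑' n : ℕ, z ^ (n + 2) / (n + 2).factorial ≤
      z ^ 2 * ∑' n : ℕ, (1 : ℝ) ^ (n + 2) / (n + 2).factorial := by
    rw [← tsum_mul_left]
    refine (hsum z).tsum_le_tsum (fun n => ?_) ((hsum 1).mul_left _)
    rw [one_pow, pow_add, mul_one_div, mul_comm (z ^ n)]
    gcongr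
    exact mul_le_of_le_one_right (by positivity) (pow_le_one₀ h0 h1)
  rw [exp_eq_one_add_add_tsum z, exp_eq_one_add_add_tsum 1]
  linarith

lemma log_sum_mul_exp_le {ι : Type*} [Fintype ι] {p z : ι → ℝ} (hp : ∀ i, 0 ≤ p i)
    (hp1 : ∑ i, p i = 1) (hz : ∀ i, 0 ≤ z i ∧ z i ≤ 1) :
    log (∑ i, p i * exp (z i)) ≤ ∑ i, p i * z i + (exp 1 - 2) * ∑ i, p i * z i ^ 2 := by
  have hone : 1 ≤ ∑ i, p i * exp (z i) :=
    hp1.symm.le.trans (sum_le_sum fun i _ => le_mul_of_one_le_right (hp i) (one_le_exp (hz i).1))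
  calc log (∑ i, p i * exp (z i)) ≤ ∑ i, p i * exp (z i) - 1 :=
        log_le_sub_one_of_pos (by linarith)
    _ ≤ ∑ i, p i * (1 + z i + (exp 1 - 2) * z i ^ 2) - 1 := by
        gcongr with i
        · exact hp i
        · exact exp_le_one_add_add_mul_sq (hz i).1 (hz i).2
    _ = ∑ i, p i * z i + (exp 1 - 2) * ∑ i, p i * z i ^ 2 := by
        simp only [mul_add, mul_one, sum_add_distrib, hp1, mul_sum, mul_left_comm (p _)]
        ring

theorem sum_le_sum_expWeights {ι : Type*} [Fintype ι] {w g : ℕ → ι → ℝ} {η : ℝ} {T : ℕ}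
    (hη : 0 < η) (hw : ∀ t i, w t i = exp (η * ∑ s ∈ range t, g s i))
    (hg : ∀ t < T, ∀ i, 0 ≤ g t i ∧ η * g t i ≤ 1) (j : ι) :
    ∑ t ∈ range T, g t j ≤
      ∑ t ∈ range T, ∑ i, w t i / (∑ k, w t k) * g t i +
        (exp 1 - 2) * η * ∑ t ∈ range T, ∑ i, w t i / (∑ k, w t k) * g t i ^ 2 +
          log (Fintype.card ι) / η := by
  set W : ℕ → ℝ := fun t => ∑ k, w t k
  set p : ℕ → ι → ℝ := fun t i => w t i / W t
  have hW (t : ℕ) : 0 < W t := sum_pos (fun i _ => hw t i ▸ exp_pos _) ⟨j, mem_univ j⟩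
  have hp (t : ℕ) (i : ι) : 0 ≤ p t i := div_nonneg (hw t i ▸ (exp_pos _).le) (hW t).le
  have hp1 (t : ℕ) : ∑ i, p t i = 1 := by rw [← sum_div, div_self (hW t).ne']
  have hw_succ (t : ℕ) (i : ι) : w (t + 1) i = w t i * exp (η * g t i) := by
    rw [hw, hw, sum_range_succ, mul_add, exp_add]
  have step (t : ℕ) (ht : t < T) : log (W (t + 1)) - log (W t) ≤
      η * ∑ i, p t i * g t i + (exp 1 - 2) * η ^ 2 * ∑ i, p t i * g t i ^ 2 := by
    have hratio : ∑ i, p t i * exp (η * g t i) = W (t + 1) / W t := by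
      simp only [p, W, div_mul_eq_mul_div, ← sum_div, hw_succ]
    rw [← log_div (hW _).ne' (hW t).ne', ← hratio]
    convert log_sum_mul_exp_le (hp t) (hp1 t)
      fun i => ⟨mul_nonneg hη.le (hg t ht i).1, (hg t ht i).2⟩ using 2 <;>
    simp only [mul_sum] <;> exact sum_congr rfl fun i _ => by ring
  have hlast : η * ∑ t ∈ range T, g t j ≤ log (W T) := by
    have := log_le_log (hw T j ▸ exp_pos _)
      (single_le_sum (fun k _ => hw T k ▸ (exp_pos _).le) (mem_univ j) : w T j ≤ W T)
    rwa [hw T j, log_exp] at this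
  have hfirst : log (W 0) = log (Fintype.card ι) := by simp [W, hw]
  have hsteps := sum_le_sum fun t ht => step t (mem_range.1 ht)
  rw [sum_range_sub (fun t => log (W t)), sum_add_distrib, ← mul_sum, ← mul_sum] at hsteps
  refine le_of_mul_le_mul_left ?_ hη
  calc η * ∑ t ∈ range T, g t j
      ≤ η * ∑ t ∈ range T, ∑ i, p t i * g t i +
          (exp 1 - 2) * η ^ 2 * ∑ t ∈ range T, ∑ i, p t i * g t i ^ 2 + log (Fintype.card ι) := by
        linarith
    _ = _ := by rw [mul_add, mul_add, mul_div_cancel₀ _ hη.ne']; ring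

section ProductWeights

variable {ι O : Type*} [Fintype ι] [DecidableEq ι] [Fintype O] (ν : ι → O → ℝ)

lemma sum_prod_mul_eq_sum_funSplitAt (t : ι) (f : (ι → O) → ℝ) :
    ∑ c : ι → O, (∏ s, ν s (c s)) * f c =
      ∑ o, ∑ r : {s // s ≠ t} → O, ν t o * (∏ s : {s // s ≠ t}, ν s (r s)) *
        f ((Equiv.funSplitAt t O).symm (o, r)) := by
  rw [← (Equiv.funSplitAt t O).symm.sum_comp, Fintype.sum_prod_type]
  refine sum_congr rfl fun o _ => sum_congr rfl fun r _ => ?_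
  rw [Fintype.prod_eq_mul_prod_subtype_ne _ t]
  congr 2
  · simp [Equiv.funSplitAt, Equiv.piSplitAt]
  · exact prod_congr rfl fun s _ => by simp [Equiv.funSplitAt, Equiv.piSplitAt, s.2]

lemma sum_prod_mul_mul_apply_eq (hν : ∀ s, ∑ o, ν s o = 1) (t : ι) {g : (ι → O) → ℝ}
    (hg : ∀ c c', (∀ s ≠ t, c s = c' s) → g c = g c') (h : O → ℝ) :
    ∑ c : ι → O, (∏ s, ν s (c s)) * (g c * h (c t)) =
      (∑ o, ν t o * h o) * ∑ c : ι → O, (∏ s, ν s (c s)) * g c := by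
  obtain ⟨o₀, -⟩ := nonempty_of_sum_ne_zero ((hν t).symm ▸ one_ne_zero)
  obtain ⟨G, hG⟩ : ∃ G : ({s // s ≠ t} → O) → ℝ,
      ∀ o r, g ((Equiv.funSplitAt t O).symm (o, r)) = G r :=
    ⟨fun r => g ((Equiv.funSplitAt t O).symm (o₀, r)), fun o r => hg _ _ fun s hs => by
      simp [Equiv.funSplitAt, Equiv.piSplitAt, hs]⟩
  have ht (o : O) (r : {s // s ≠ t} → O) : (Equiv.funSplitAt t O).symm (o, r) t = o := by
    simp [Equiv.funSplitAt, Equiv.piSplitAt]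
  rw [sum_prod_mul_eq_sum_funSplitAt ν t, sum_prod_mul_eq_sum_funSplitAt ν t]
  simp only [hG, ht]
  calc ∑ o, ∑ r, ν t o * (∏ s : {s // s ≠ t}, ν s (r s)) * (G r * h o)
      = ∑ o, ∑ r, ν t o * h o * ((∏ s : {s // s ≠ t}, ν s (r s)) * G r) :=
        sum_congr rfl fun o _ => sum_congr rfl fun r _ => by ring
    _ = (∑ o, ν t o * h o) * ∑ r, (∏ s : {s // s ≠ t}, ν s (r s)) * G r := by
        rw [Fintype.sum_mul_sum]
    _ = _ := by simp only [mul_assoc, ← Fintype.sum_mul_sum, hν, one_mul]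

end ProductWeights

noncomputable def polaRoundLaw (K t : ℕ) : Option (Fin K) → ℝ
  | some _ => polaDelta K t * (1 / (K : ℝ))
  | none => 1 - polaDelta K t

noncomputable def polaExpect (K T : ℕ) (f : (Fin T → Option (Fin K)) → ℝ) : ℝ :=
  ∑ c, polaHistProb K T c * f c

noncomputable def polaRoundEst (K : ℕ) (x : ℕ → Fin K → ℝ) (t : ℕ) (j : Fin K) :
    Option (Fin K) → ℝ
  | some j' => if j' = j then x t j * (K : ℝ) / polaDelta K t else 0
  | none => 0

-- The guard `t < T` is the one in `polaWeight`, so that the weight recursion holds by `rfl`.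
noncomputable def polaEst (K T : ℕ) (x : ℕ → Fin K → ℝ) (c : Fin T → Option (Fin K))
    (t : ℕ) (j : Fin K) : ℝ :=
  if h : t < T then polaRoundEst K x t j (c ⟨t, h⟩) else 0

noncomputable def polaAttackReward (K T : ℕ) (x : ℕ → Fin K → ℝ) (η : ℝ)
    (c : Fin T → Option (Fin K)) (t : ℕ) : ℝ :=
  ∑ i, polaP K T x η c t i * x t i

section Pola

variable {K T : ℕ} {x : ℕ → Fin K → ℝ} {η : ℝ}

lemma polaDelta_nonneg (K t : ℕ) : 0 ≤ polaDelta K t :=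
  le_min zero_le_one (rpow_nonneg (by have := log_natCast_nonneg K; positivity) _)

lemma polaDelta_le_one (K t : ℕ) : polaDelta K t ≤ 1 := min_le_left _ _

lemma polaDelta_pos (hK : 2 ≤ K) (t : ℕ) : 0 < polaDelta K t := by
  have : 0 < log K := log_pos (by exact_mod_cast hK)
  exact lt_min one_pos (rpow_pos_of_pos (by positivity) _)

lemma polaRoundLaw_nonneg (t : ℕ) (o : Option (Fin K)) : 0 ≤ polaRoundLaw K t o := by
  cases o
  · simpa [polaRoundLaw] using polaDelta_le_one K t
  · simpa [polaRoundLaw] using mul_nonneg (polaDelta_nonneg K t) (by positivity)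

lemma sum_polaRoundLaw (hK : 0 < K) (t : ℕ) : ∑ o, polaRoundLaw K t o = 1 := by
  simp only [polaRoundLaw, Fintype.sum_option, sum_const, card_univ, Fintype.card_fin,
    nsmul_eq_mul]
  field_simp
  ring

lemma polaHistProb_eq_prod (c : Fin T → Option (Fin K)) :
    polaHistProb K T c = ∏ t : Fin T, polaRoundLaw K t (c t) := rfl

lemma polaExpect_const (hK : 0 < K) (r : ℝ) : polaExpect K T (fun _ => r) = r := by
  simp only [polaExpect, ← sum_mul, polaHistProb_eq_prod, ← Fintype.prod_sum,
    sum_polaRoundLaw hK, prod_const_one, one_mul]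

lemma polaExpect_mono {f g : (Fin T → Option (Fin K)) → ℝ} (h : ∀ c, f c ≤ g c) :
    polaExpect K T f ≤ polaExpect K T g :=
  sum_le_sum fun c _ => mul_le_mul_of_nonneg_left (h c)
    (prod_nonneg fun _ _ => polaRoundLaw_nonneg _ _)

lemma polaExpect_add (f g : (Fin T → Option (Fin K)) → ℝ) :
    polaExpect K T (fun c => f c + g c) = polaExpect K T f + polaExpect K T g := by
  simp only [polaExpect, mul_add, sum_add_distrib]

lemma polaExpect_const_mul (r : ℝ) (f : (Fin T → Option (Fin K)) → ℝ) :
    polaExpect K T (fun c => r * f c) = r * polaExpect K T f := by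
  simp only [polaExpect, mul_sum, mul_left_comm]

lemma polaExpect_sum {α : Type*} (s : Finset α) (f : α → (Fin T → Option (Fin K)) → ℝ) :
    polaExpect K T (fun c => ∑ a ∈ s, f a c) = ∑ a ∈ s, polaExpect K T (f a) := by
  simp only [polaExpect, mul_sum]
  exact sum_comm

lemma polaExpect_mul_apply (hK : 0 < K) (t : Fin T) {g : (Fin T → Option (Fin K)) → ℝ}
    (hg : ∀ c c', (∀ s ≠ t, c s = c' s) → g c = g c') (h : Option (Fin K) → ℝ) :
    polaExpect K T (fun c => g c * h (c t)) =
      (∑ o, polaRoundLaw K t o * h o) * polaExpect K T g :=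
  sum_prod_mul_mul_apply_eq (fun s : Fin T => polaRoundLaw K s) (fun s => sum_polaRoundLaw hK s)
    t hg h

lemma polaWeight_eq_exp (c : Fin T → Option (Fin K)) (t : ℕ) (j : Fin K) :
    polaWeight K T x η c t j = exp (η * ∑ s ∈ range t, polaEst K T x c s j) := by
  induction t with
  | zero => simp [polaWeight]
  | succ t ih => rw [sum_range_succ, mul_add, exp_add, ← ih]; rfl

lemma polaP_congr {c c' : Fin T → Option (Fin K)} {t : ℕ}
    (h : ∀ s : Fin T, (s : ℕ) < t → c s = c' s) (i : Fin K) :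
    polaP K T x η c t i = polaP K T x η c' t i := by
  have hw (j : Fin K) : polaWeight K T x η c t j = polaWeight K T x η c' t j := by
    simp only [polaWeight_eq_exp]
    congr 2
    refine sum_congr rfl fun s hs => ?_
    unfold polaEst
    split_ifs with hsT
    · rw [h ⟨s, hsT⟩ (mem_range.1 hs)]
    · rfl
  simp only [polaP, hw]

lemma polaP_nonneg (c : Fin T → Option (Fin K)) (t : ℕ) (i : Fin K) :
    0 ≤ polaP K T x η c t i :=
  div_nonneg (polaWeight_eq_exp c t i ▸ (exp_pos _).le)
    (sum_nonneg fun j _ => polaWeight_eq_exp c t j ▸ (exp_pos _).le)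

lemma sum_polaP (hK : 0 < K) (c : Fin T → Option (Fin K)) (t : ℕ) :
    ∑ i, polaP K T x η c t i = 1 := by
  have : 0 < ∑ j, polaWeight K T x η c t j :=
    sum_pos (fun j _ => polaWeight_eq_exp c t j ▸ exp_pos _) ⟨⟨0, hK⟩, mem_univ _⟩
  simp only [polaP, ← sum_div, div_self this.ne']

lemma polaRoundEst_nonneg (hK : 2 ≤ K) {t : ℕ} {j : Fin K} (hx : 0 ≤ x t j)
    (o : Option (Fin K)) : 0 ≤ polaRoundEst K x t j o := by
  have := polaDelta_pos hK t
  rcases o with _ | j'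
  · exact le_rfl
  · dsimp only [polaRoundEst]
    split_ifs <;> positivity

lemma polaRoundEst_le (hK : 2 ≤ K) {t : ℕ} {j : Fin K} (hx : x t j ≤ 1)
    (o : Option (Fin K)) : polaRoundEst K x t j o ≤ K / polaDelta K t := by
  have := polaDelta_pos hK t
  rcases o with _ | j'
  · exact div_nonneg (Nat.cast_nonneg K) this.le
  · dsimp only [polaRoundEst]
    split_ifs
    · rw [mul_comm]; gcongr; exact mul_le_of_le_one_right (Nat.cast_nonneg K) hx
    · positivity

lemma polaEst_nonneg (hK : 2 ≤ K) (hx : ∀ t < T, ∀ j, 0 ≤ x t j ∧ x t j ≤ 1)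
    (c : Fin T → Option (Fin K)) (t : ℕ) (j : Fin K) : 0 ≤ polaEst K T x c t j := by
  unfold polaEst
  split_ifs with ht
  exacts [polaRoundEst_nonneg hK (hx t ht j).1 _, le_rfl]

lemma polaEst_le (hK : 2 ≤ K) (hx : ∀ t < T, ∀ j, 0 ≤ x t j ∧ x t j ≤ 1)
    (c : Fin T → Option (Fin K)) (t : ℕ) (j : Fin K) :
    polaEst K T x c t j ≤ K / polaDelta K t := by
  unfold polaEst
  split_ifs with ht
  exacts [polaRoundEst_le hK (hx t ht j).2 _, div_nonneg (Nat.cast_nonneg K) (polaDelta_nonneg K t)]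

lemma sum_polaRoundLaw_mul_polaRoundEst (hK : 2 ≤ K) (t : ℕ) (j : Fin K) :
    ∑ o, polaRoundLaw K t o * polaRoundEst K x t j o = x t j := by
  have := polaDelta_pos hK t
  have : (0 : ℝ) < K := by positivity
  simp only [polaRoundLaw, polaRoundEst, Fintype.sum_option, mul_zero, mul_ite, sum_ite_eq',
    mem_univ, if_true, zero_add]
  field_simp

lemma polaExpect_mul_polaEst (hK : 2 ≤ K) {t : ℕ} (ht : t < T)
    {F : (Fin T → Option (Fin K)) → ℝ}
    (hF : ∀ c c', (∀ s : Fin T, (s : ℕ) < t → c s = c' s) → F c = F c') (i : Fin K) :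
    polaExpect K T (fun c => F c * polaEst K T x c t i) = x t i * polaExpect K T F := by
  simp only [polaEst, dif_pos ht]
  rw [polaExpect_mul_apply (by omega) ⟨t, ht⟩ (fun c c' h => hF c c' fun s hs =>
      h s (Fin.ne_of_val_ne hs.ne)), sum_polaRoundLaw_mul_polaRoundEst hK]

lemma polaExpect_polaEst (hK : 2 ≤ K) {t : ℕ} (ht : t < T) (j : Fin K) :
    polaExpect K T (fun c => polaEst K T x c t j) = x t j := by
  simpa [polaExpect_const (by omega : 0 < K)] using
    polaExpect_mul_polaEst (x := x) hK ht (F := fun _ => 1) (fun _ _ _ => rfl) j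

lemma polaExpect_sum_polaP_mul_polaEst (hK : 2 ≤ K) {t : ℕ} (ht : t < T) :
    polaExpect K T (fun c => ∑ i, polaP K T x η c t i * polaEst K T x c t i) =
      polaExpect K T (fun c => polaAttackReward K T x η c t) := by
  simp only [polaAttackReward, polaExpect_sum]
  refine sum_congr rfl fun i _ => ?_
  rw [polaExpect_mul_polaEst hK ht (fun c c' h => polaP_congr h i)]
  simp only [mul_comm _ (x t i), polaExpect_const_mul]

lemma polaAttackReward_le_one (hK : 0 < K) (hx : ∀ t < T, ∀ j, 0 ≤ x t j ∧ x t j ≤ 1)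
    {t : ℕ} (ht : t < T) (c : Fin T → Option (Fin K)) : polaAttackReward K T x η c t ≤ 1 :=
  calc polaAttackReward K T x η c t ≤ ∑ i, polaP K T x η c t i :=
        sum_le_sum fun i _ => mul_le_of_le_one_right (polaP_nonneg c t i) (hx t ht i).2
    _ = 1 := sum_polaP hK c t

lemma polaExpect_polaAttackReward_le_one (hK : 0 < K)
    (hx : ∀ t < T, ∀ j, 0 ≤ x t j ∧ x t j ≤ 1) {t : ℕ} (ht : t < T) :
    polaExpect K T (fun c => polaAttackReward K T x η c t) ≤ 1 :=
  (polaExpect_mono (polaAttackReward_le_one hK hx ht)).trans (polaExpect_const hK 1).le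

lemma polaExpect_sum_polaP_mul_polaEst_sq_le (hK : 2 ≤ K)
    (hx : ∀ t < T, ∀ j, 0 ≤ x t j ∧ x t j ≤ 1) {t : ℕ} (ht : t < T) :
    polaExpect K T (fun c => ∑ i, polaP K T x η c t i * polaEst K T x c t i ^ 2) ≤
      K / polaDelta K t := by
  have hKδ : 0 ≤ (K : ℝ) / polaDelta K t := div_nonneg (Nat.cast_nonneg K) (polaDelta_nonneg K t)
  calc polaExpect K T (fun c => ∑ i, polaP K T x η c t i * polaEst K T x c t i ^ 2)
      ≤ polaExpect K T (fun c => K / polaDelta K t *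
          ∑ i, polaP K T x η c t i * polaEst K T x c t i) := by
        refine polaExpect_mono fun c => ?_
        rw [mul_sum]
        refine sum_le_sum fun i _ => ?_
        have := mul_le_mul_of_nonneg_left (polaEst_le hK hx c t i)
          (mul_nonneg (polaP_nonneg (x := x) (η := η) c t i) (polaEst_nonneg hK hx c t i))
        linarith
    _ ≤ K / polaDelta K t * 1 := by
        rw [polaExpect_const_mul, polaExpect_sum_polaP_mul_polaEst hK ht]
        exact mul_le_mul_of_nonneg_left (polaExpect_polaAttackReward_le_one (by omega) hx ht) hKδ
    _ = K / polaDelta K t := mul_one _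

lemma polaGain_eq (hK : 0 < K) :
    polaGain K T x η = ∑ t ∈ range T,
      (1 - polaDelta K t) * polaExpect K T (fun c => polaAttackReward K T x η c t) := by
  rw [← Fin.sum_univ_eq_sum_range (fun t => (1 - polaDelta K t) *
    polaExpect K T (fun c => polaAttackReward K T x η c t))]
  calc polaGain K T x η = ∑ t : Fin T, polaExpect K T
        (fun c => polaAttackReward K T x η c t * (c t).elim 1 fun _ => 0) := by
        simp only [polaGain, polaExpect, mul_sum]
        rw [sum_comm]
        refine sum_congr rfl fun t _ => sum_congr rfl fun c _ => ?_
        cases c t <;> simp [polaAttackReward]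
    _ = _ := by
        refine sum_congr rfl fun t _ => ?_
        refine (polaExpect_mul_apply hK t (g := fun c => polaAttackReward K T x η c t)
          (h := fun o => o.elim 1 fun _ => 0)
          (fun c c' h => sum_congr rfl fun i _ => by
            rw [polaP_congr fun s hs => h s (Fin.ne_of_val_ne hs.ne)])).trans ?_
        simp [Fintype.sum_option, polaRoundLaw]

lemma sum_sub_sum_polaDelta_le_polaGain (hK : 0 < K)
    (hx : ∀ t < T, ∀ j, 0 ≤ x t j ∧ x t j ≤ 1) :
    ∑ t ∈ range T, polaExpect K T (fun c => polaAttackReward K T x η c t) -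
      ∑ t ∈ range T, polaDelta K t ≤ polaGain K T x η := by
  rw [polaGain_eq hK, ← sum_sub_distrib]
  refine sum_le_sum fun t ht => ?_
  have := mul_nonneg (polaDelta_nonneg K t)
    (sub_nonneg.2 (polaExpect_polaAttackReward_le_one (η := η) hK hx (mem_range.1 ht)))
  linarith

theorem sum_le_sum_polaExpect_polaAttackReward (hK : 2 ≤ K)
    (hx : ∀ t < T, ∀ j, 0 ≤ x t j ∧ x t j ≤ 1) (hη0 : 0 < η)
    (hηδ : ∀ t < T, η * (K / polaDelta K t) ≤ 1) (j : Fin K) :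
    ∑ t ∈ range T, x t j ≤
      ∑ t ∈ range T, polaExpect K T (fun c => polaAttackReward K T x η c t) +
        (exp 1 - 2) * η * ∑ t ∈ range T, (K / polaDelta K t : ℝ) + log K / η := by
  have hpath (c : Fin T → Option (Fin K)) := sum_le_sum_expWeights hη0 (polaWeight_eq_exp c)
    (fun t ht i => ⟨polaEst_nonneg hK hx c t i, (mul_le_mul_of_nonneg_left
      (polaEst_le hK hx c t i) hη0.le).trans (hηδ t ht)⟩) j
  have he : 0 ≤ exp 1 - 2 := by linarith [add_one_le_exp 1]
  calc ∑ t ∈ range T, x t j = polaExpect K T (fun c => ∑ t ∈ range T, polaEst K T x c t j) := by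
        rw [polaExpect_sum]
        exact sum_congr rfl fun t ht => (polaExpect_polaEst hK (mem_range.1 ht) j).symm
    _ ≤ polaExpect K T (fun c => ∑ t ∈ range T, ∑ i, polaP K T x η c t i * polaEst K T x c t i +
          (exp 1 - 2) * η * ∑ t ∈ range T, ∑ i, polaP K T x η c t i * polaEst K T x c t i ^ 2 +
            log K / η) := polaExpect_mono fun c => by
              have := hpath c
              rwa [Fintype.card_fin] at this
    _ ≤ _ := by
        rw [polaExpect_add, polaExpect_add, polaExpect_const_mul, polaExpect_const (by omega),
          polaExpect_sum, polaExpect_sum,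
          sum_congr rfl fun t ht => polaExpect_sum_polaP_mul_polaEst hK (mem_range.1 ht)]
        gcongr with t ht
        exact polaExpect_sum_polaP_mul_polaEst_sq_le hK hx (mem_range.1 ht)

end Pola

section Rates

lemma rpow_one_third_pow {u : ℝ} (hu : 0 ≤ u) (n : ℕ) :
    (u ^ (1 / 3 : ℝ)) ^ n = u ^ ((n : ℝ) / 3) := by
  rw [← rpow_natCast, ← rpow_mul hu]
  ring_nf

lemma rpow_one_third_le_sub {u : ℝ} (hu : 0 ≤ u) :
    u ^ (1 / 3 : ℝ) ≤ 3 / 4 * ((u + 1) ^ (4 / 3 : ℝ) - u ^ (4 / 3 : ℝ)) := by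
  have hu' : 0 ≤ u + 1 := by linarith
  have hX3 : (u ^ (1 / 3 : ℝ)) ^ 3 = u := by rw [rpow_one_third_pow hu]; norm_num
  have hY3 : ((u + 1) ^ (1 / 3 : ℝ)) ^ 3 = u + 1 := by rw [rpow_one_third_pow hu']; norm_num
  have hX4 : u ^ (4 / 3 : ℝ) = (u ^ (1 / 3 : ℝ)) ^ 4 := by rw [rpow_one_third_pow hu]; norm_num
  have hY4 : (u + 1) ^ (4 / 3 : ℝ) = ((u + 1) ^ (1 / 3 : ℝ)) ^ 4 := by
    rw [rpow_one_third_pow hu']; norm_num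
  have hX : 0 ≤ u ^ (1 / 3 : ℝ) := rpow_nonneg hu _
  have hY : 0 ≤ (u + 1) ^ (1 / 3 : ℝ) := rpow_nonneg hu' _
  rw [hX4, hY4]
  set X := u ^ (1 / 3 : ℝ)
  set Y := (u + 1) ^ (1 / 3 : ℝ)
  -- `3 Y⁴ - 4 X Y³ + X⁴ = (Y - X)² (3 Y² + 2 X Y + X²)` and `Y³ - X³ = 1`
  have hX1 : X = X * (Y ^ 3 - X ^ 3) := by rw [hX3, hY3]; ring
  nlinarith [mul_nonneg (sq_nonneg (Y - X)) (by positivity : 0 ≤ 3 * Y ^ 2 + 2 * X * Y + X ^ 2)]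

lemma inv_rpow_one_third_le_sub {u : ℝ} (hu : 0 ≤ u) :
    ((u + 1) ^ (1 / 3 : ℝ))⁻¹ ≤ 3 / 2 * ((u + 1) ^ (2 / 3 : ℝ) - u ^ (2 / 3 : ℝ)) := by
  have hu' : 0 ≤ u + 1 := by linarith
  have hX3 : ((u + 1) ^ (1 / 3 : ℝ)) ^ 3 = u + 1 := by rw [rpow_one_third_pow hu']; norm_num
  have hB3 : (u ^ (1 / 3 : ℝ)) ^ 3 = u := by rw [rpow_one_third_pow hu]; norm_num
  have hX2 : (u + 1) ^ (2 / 3 : ℝ) = ((u + 1) ^ (1 / 3 : ℝ)) ^ 2 := by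
    rw [rpow_one_third_pow hu']; norm_num
  have hB2 : u ^ (2 / 3 : ℝ) = (u ^ (1 / 3 : ℝ)) ^ 2 := by rw [rpow_one_third_pow hu]; norm_num
  have hX : 0 < (u + 1) ^ (1 / 3 : ℝ) := rpow_pos_of_pos (by linarith) _
  have hB : 0 ≤ u ^ (1 / 3 : ℝ) := rpow_nonneg hu _
  rw [hX2, hB2, inv_le_iff_one_le_mul₀' hX]
  set X := (u + 1) ^ (1 / 3 : ℝ)
  set B := u ^ (1 / 3 : ℝ)
  -- `X³ - 3 X B² + 2 B³ = (X - B)² (X + 2 B)` and `X³ - B³ = 1`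
  nlinarith [mul_nonneg (sq_nonneg (X - B)) (by positivity : 0 ≤ X + 2 * B)]

variable {K T : ℕ}

lemma polaDelta_eq_one {t : ℕ} (h : (t : ℝ) + 1 ≤ K * log K) : polaDelta K t = 1 :=
  min_eq_left (one_le_rpow ((one_le_div (by positivity)).2 h) (by norm_num))

lemma polaDelta_eq_rpow {t : ℕ} (h : (K : ℝ) * log K ≤ t + 1) :
    polaDelta K t = ((K : ℝ) * log K / (t + 1)) ^ (1 / 3 : ℝ) :=
  min_eq_right (rpow_le_one (by have := log_natCast_nonneg K; positivity)
    ((div_le_one (by positivity)).2 h) (by norm_num))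

lemma rpow_le_polaDelta (hT : (K : ℝ) * log K ≤ T) {t : ℕ} (ht : t < T) :
    ((K : ℝ) * log K / T) ^ (1 / 3 : ℝ) ≤ polaDelta K t := by
  have ha : 0 ≤ (K : ℝ) * log K := mul_nonneg (Nat.cast_nonneg K) (log_natCast_nonneg K)
  exact le_min (rpow_le_one (by positivity) (div_le_one_of_le₀ hT (Nat.cast_nonneg T))
      (by norm_num))
    (rpow_le_rpow (by positivity) (div_le_div_of_nonneg_left ha (by positivity)
      (by exact_mod_cast Nat.succ_le_of_lt ht)) (by norm_num))

lemma rpow_log_div_mul_natCast (K T : ℕ) :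
    (log K / ((K : ℝ) ^ 2 * T)) ^ (1 / 3 : ℝ) * K = ((K : ℝ) * log K / T) ^ (1 / 3 : ℝ) := by
  have hlog : 0 ≤ log K := log_natCast_nonneg K
  have hsplit : (K : ℝ) * log K / T = log K / ((K : ℝ) ^ 2 * T) * (K : ℝ) ^ 3 := by
    rcases eq_or_ne (K : ℝ) 0 with hK | hK
    · simp [hK]
    · field_simp
  rw [hsplit, mul_rpow (by positivity) (by positivity), ← rpow_natCast (K : ℝ) 3,
    ← rpow_mul (Nat.cast_nonneg K)]
  norm_num

lemma mul_div_polaDelta_le_one (hK : 2 ≤ K) (hT : (K : ℝ) * log K ≤ T) {η : ℝ}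
    (hη : η ≤ (log K / ((K : ℝ) ^ 2 * T)) ^ (1 / 3 : ℝ)) {t : ℕ} (ht : t < T) :
    η * (K / polaDelta K t) ≤ 1 := by
  rw [← mul_div_assoc, div_le_one (polaDelta_pos hK t)]
  calc η * K ≤ (log K / ((K : ℝ) ^ 2 * T)) ^ (1 / 3 : ℝ) * K :=
        mul_le_mul_of_nonneg_right hη (Nat.cast_nonneg K)
    _ = ((K : ℝ) * log K / T) ^ (1 / 3 : ℝ) := rpow_log_div_mul_natCast K T
    _ ≤ polaDelta K t := rpow_le_polaDelta hT ht

lemma sum_polaDelta_le (K T : ℕ) :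
    ∑ t ∈ range T, polaDelta K t ≤ 3 / 2 * ((K : ℝ) * T ^ 2 * log K) ^ (1 / 3 : ℝ) := by
  have ha : 0 ≤ (K : ℝ) * log K := mul_nonneg (Nat.cast_nonneg K) (log_natCast_nonneg K)
  calc ∑ t ∈ range T, polaDelta K t
      ≤ ∑ t ∈ range T, ((K : ℝ) * log K) ^ (1 / 3 : ℝ) *
          (3 / 2 * (((t + 1 : ℕ) : ℝ) ^ (2 / 3 : ℝ) - (t : ℝ) ^ (2 / 3 : ℝ))) := by
        gcongr with t
        calc polaDelta K t ≤ ((K : ℝ) * log K / (t + 1)) ^ (1 / 3 : ℝ) := min_le_right _ _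
          _ = ((K : ℝ) * log K) ^ (1 / 3 : ℝ) * (((t : ℝ) + 1) ^ (1 / 3 : ℝ))⁻¹ := by
            rw [div_rpow ha (by positivity), div_eq_mul_inv]
          _ ≤ _ := by
            push_cast
            gcongr
            exact inv_rpow_one_third_le_sub (Nat.cast_nonneg t)
    _ = ((K : ℝ) * log K) ^ (1 / 3 : ℝ) * (3 / 2 * (T : ℝ) ^ (2 / 3 : ℝ)) := by
        rw [← mul_sum, ← mul_sum, sum_range_sub (fun t : ℕ => (t : ℝ) ^ (2 / 3 : ℝ))]
        norm_num
    _ = _ := by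
        rw [show (K : ℝ) * T ^ 2 * log K = K * log K * T ^ 2 by ring,
          mul_rpow ha (by positivity), ← rpow_natCast (T : ℝ) 2, ← rpow_mul (Nat.cast_nonneg T)]
        norm_num
        ring

lemma sum_range_div_polaDelta {n : ℕ} (hn : (n : ℝ) ≤ K * log K) :
    ∑ t ∈ range n, (K / polaDelta K t : ℝ) = n * K := by
  have hterm (t : ℕ) (ht : t ∈ range n) : (K / polaDelta K t : ℝ) = K := by
    have : (t : ℝ) + 1 ≤ n := by exact_mod_cast mem_range.1 ht
    rw [polaDelta_eq_one (by linarith), div_one]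
  rw [sum_congr rfl hterm, sum_const, card_range, nsmul_eq_mul]

lemma sum_Ico_div_polaDelta_le {n : ℕ} (hn : (K : ℝ) * log K ≤ n + 1) (hnT : n ≤ T) :
    ∑ t ∈ Ico n T, (K / polaDelta K t : ℝ) ≤ K / ((K : ℝ) * log K) ^ (1 / 3 : ℝ) *
      (3 / 4 * (((T : ℝ) + 1) ^ (4 / 3 : ℝ) - ((n : ℝ) + 1) ^ (4 / 3 : ℝ))) := by
  have ha : 0 ≤ (K : ℝ) * log K := mul_nonneg (Nat.cast_nonneg K) (log_natCast_nonneg K)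
  calc ∑ t ∈ Ico n T, (K / polaDelta K t : ℝ)
      ≤ ∑ t ∈ Ico n T, K / ((K : ℝ) * log K) ^ (1 / 3 : ℝ) *
          (3 / 4 * ((((t + 1 : ℕ) : ℝ) + 1) ^ (4 / 3 : ℝ) - ((t : ℝ) + 1) ^ (4 / 3 : ℝ))) := by
        refine sum_le_sum fun t ht => ?_
        have : (n : ℝ) ≤ t := by exact_mod_cast (mem_Ico.1 ht).1
        rw [polaDelta_eq_rpow (by linarith), div_rpow ha (by positivity), div_div_eq_mul_div,
          mul_div_right_comm]
        push_cast
        gcongr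
        exact rpow_one_third_le_sub (by positivity)
    _ = _ := by
        rw [← mul_sum, ← mul_sum, sum_Ico_sub (fun t : ℕ => ((t : ℝ) + 1) ^ (4 / 3 : ℝ)) hnT]

lemma sum_div_polaDelta_le (hK : 2 ≤ K) (hT : (K : ℝ) * log K ≤ T) :
    ∑ t ∈ range T, (K / polaDelta K t : ℝ) ≤
      K * (3 / 4 * (((T : ℝ) + 1) ^ 4 / (K * log K)) ^ (1 / 3 : ℝ) + K * log K / 4) := by
  set a := (K : ℝ) * log K
  have ha : 0 < a := by
    have : 0 < log K := log_pos (by exact_mod_cast hK)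
    positivity
  have hc : 0 < a ^ (1 / 3 : ℝ) := rpow_pos_of_pos ha _
  -- split where `δ_t` stops being `1`
  set n := ⌊a⌋₊
  have hna : (n : ℝ) ≤ a := Nat.floor_le ha.le
  have han : a < n + 1 := Nat.lt_floor_add_one a
  have hnT : n ≤ T := by exact_mod_cast hna.trans hT
  have hn4 : a * a ^ (1 / 3 : ℝ) ≤ ((n : ℝ) + 1) ^ (4 / 3 : ℝ) :=
    calc a * a ^ (1 / 3 : ℝ) = a ^ (4 / 3 : ℝ) := by
          rw [← rpow_one_add' ha.le (by norm_num)]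
          norm_num
      _ ≤ _ := rpow_le_rpow ha.le han.le (by norm_num)
  have hT4 : (((T : ℝ) + 1) ^ 4 / a) ^ (1 / 3 : ℝ) =
      ((T : ℝ) + 1) ^ (4 / 3 : ℝ) / a ^ (1 / 3 : ℝ) := by
    rw [div_rpow (by positivity) ha.le, ← rpow_natCast _ 4, ← rpow_mul (by positivity)]
    norm_num
  have hKn : (n : ℝ) * K ≤ a * K := mul_le_mul_of_nonneg_right hna (Nat.cast_nonneg K)
  have hKa : 3 / 4 * K * a ≤ K / a ^ (1 / 3 : ℝ) * (3 / 4 * ((n : ℝ) + 1) ^ (4 / 3 : ℝ)) :=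
    calc 3 / 4 * K * a = K / a ^ (1 / 3 : ℝ) * (3 / 4 * (a * a ^ (1 / 3 : ℝ))) := by
          field_simp
      _ ≤ _ := by gcongr
  have hsplit : K / a ^ (1 / 3 : ℝ) * (3 / 4 * (((T : ℝ) + 1) ^ (4 / 3 : ℝ) -
      ((n : ℝ) + 1) ^ (4 / 3 : ℝ))) = K * (3 / 4 * (((T : ℝ) + 1) ^ (4 / 3 : ℝ) / a ^ (1 / 3 : ℝ)))
        - K / a ^ (1 / 3 : ℝ) * (3 / 4 * ((n : ℝ) + 1) ^ (4 / 3 : ℝ)) := by ring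
  rw [← sum_range_add_sum_Ico _ hnT, sum_range_div_polaDelta hna, hT4]
  linarith [sum_Ico_div_polaDelta_le han.le hnT]

end Rates

/-- for any `K ≥ 2`, any horizon `T ≥ K·ln K`, any rewards
`x t j ∈ [0,1]` and any `0 < η ≤ (ln K/(K²·T))^{1/3}`, the expected regret of
POLA satisfies
`G_max − E[G_POLA] ≤ (e−2)·η·K·((3/4)·((T+1)⁴/(K·ln K))^{1/3} + K·ln K/4)
  + (ln K)/η + (3/2)·(K·T²·ln K)^{1/3}`,
where `G_max = max_j ∑_t x t j`. -/
theorem pola_regret_upper_bound (K T : ℕ) (hK : 2 ≤ K)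
    (hT : (K : ℝ) * Real.log K ≤ (T : ℝ))
    (x : ℕ → Fin K → ℝ) (hx : ∀ t < T, ∀ j, 0 ≤ x t j ∧ x t j ≤ 1)
    (η : ℝ) (hη0 : 0 < η)
    (hη : η ≤ (Real.log K / ((K : ℝ) ^ 2 * (T : ℝ))) ^ ((1 : ℝ) / 3)) :
    (Finset.univ.sup' (⟨⟨0, by omega⟩, Finset.mem_univ _⟩ :
          (Finset.univ : Finset (Fin K)).Nonempty)
        fun j : Fin K => ∑ t ∈ Finset.range T, x t j) -
        polaGain K T x η ≤
      (Real.exp 1 - 2) * η * (K : ℝ) *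
          ((3 / 4) * ((((T : ℝ) + 1) ^ 4 / ((K : ℝ) * Real.log K)) ^ ((1 : ℝ) / 3)) +
            (K : ℝ) * Real.log K / 4) +
        Real.log K / η +
        (3 / 2) * (((K : ℝ) * (T : ℝ) ^ 2 * Real.log K) ^ ((1 : ℝ) / 3)) := by
  obtain ⟨j, -, hj⟩ := exists_mem_eq_sup' ⟨⟨0, by omega⟩, mem_univ _⟩
    fun j : Fin K => ∑ t ∈ range T, x t j
  rw [hj]
  have hreward := sum_le_sum_polaExpect_polaAttackReward hK hx hη0
    (fun t ht => mul_div_polaDelta_le_one hK hT hη ht) j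
  have hgain := sum_sub_sum_polaDelta_le_polaGain (η := η) (by omega) hx
  have hscaled := mul_le_mul_of_nonneg_left (sum_div_polaDelta_le hK hT)
    (mul_nonneg (by linarith [add_one_le_exp 1] : 0 ≤ exp 1 - 2) hη0.le)
  have hδ := sum_polaDelta_le K T
  linarith
end

section
/- Fix K ≥ 2, T ≥ 1, an action i ∈ {1,…,K}, ε ∈ (0,1/2), and a (possibly randomized) observation strategy which at each round t selects an action to observe as a function of the previously observed reward values r_1,…,r_{t−1} ∈ {0,1}. Under the law P_i, the reward observed at a round where action i is selected is Bernoulli(1/2+ε) and the reward observed at a round where any other action is selected is Bernoulli(1/2), independently across rounds; under the law P_unif every observed reward is Bernoulli(1/2), independently across rounds. Let N_i be the number of rounds t ∈ {1,…,T} at which action i is selected. Then for any function f from {0,1}^T to [0, M] of the sequence of observed rewards, E_i[f(r)] ≤ E_unif[f(r)] + (M/2)·√( −E_unif[N_i]·ln(1−4ε²) ). -/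
/-!
Model of a (possibly randomized) observation strategy over `K` actions and
`T` rounds.  At each round the strategy selects an action as a (randomized)
function of the previously observed binary reward values; the observed value
at a round where action `a` is selected is `Bernoulli(q a)`, independently
across rounds.  We compute expectations by recursion over the rounds: the
history is the list of observed values so far.
-/

/-- `obsExp K q S f r h` is the expectation of `f` applied to the full
sequence of observed values, when `r` rounds remain, the values observed so
far are `h`, the strategy is `S` (a distribution over selected actions for
each history of observed values) and the observed value at a round where
action `a` is selected is `Bernoulli(q a)`. -/
noncomputable def obsExp (K : ℕ) (q : Fin K → ℝ) (S : List Bool → Fin K → ℝ)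
    (f : List Bool → ℝ) : ℕ → List Bool → ℝ
  | 0, h => f h
  | r + 1, h =>
      ∑ a : Fin K, S h a *
        (q a * obsExp K q S f r (h ++ [true]) +
          (1 - q a) * obsExp K q S f r (h ++ [false]))

/-- `obsCount K q S i r h` is the expected number of rounds at which action
`i` is selected among the `r` remaining rounds, in the same model. -/
noncomputable def obsCount (K : ℕ) (q : Fin K → ℝ) (S : List Bool → Fin K → ℝ)
    (i : Fin K) : ℕ → List Bool → ℝ
  | 0, _ => 0
  | r + 1, h =>
      ∑ a : Fin K, S h a *
        ((if a = i then (1 : ℝ) else 0) +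
          q a * obsCount K q S i r (h ++ [true]) +
          (1 - q a) * obsCount K q S i r (h ++ [false]))

/-!
Under both laws the observation record is a chain of conditional Bernoulli draws: after a
record `h` the next value is `1` with probability `1/2` under `P_unif` and `1/2 + ε S(h,i)` under
`P_i`, whatever the strategy does. By the chain rule, `KL(P_unif ‖ P_i)` is the `P_unif`-expected
sum of the per-round divergences `KL(Ber(1/2) ‖ Ber(1/2 + ε s)) = -½ log(1 - 4ε²s²)`, and by
concavity of `log` each of these is at most `-½ s log(1 - 4ε²)`, where `s` is the probability of
selecting `i`; hence `KL(P_unif ‖ P_i) ≤ -½ log(1 - 4ε²) E_unif[N_i]`. Pinsker's inequality bounds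
`‖P_i - P_unif‖₁` by `√(2 KL)`, and a function with values in `[0, M]` moves by at most
`M/2 ‖P_i - P_unif‖₁` between two laws.
-/

open Finset Real

noncomputable section

def finKL {α : Type*} (V : Finset α) (p q : α → ℝ) : ℝ :=
  ∑ s ∈ V, p s * log (p s / q s)

def bernKL (p q : ℝ) : ℝ :=
  p * log (p / q) + (1 - p) * log ((1 - p) / (1 - q))

end

lemma two_mul_sq_sub_le_bernKL_of_le {p q : ℝ} (hq0 : 0 < q) (hqp : q ≤ p) (hp1 : p < 1) :
    2 * (p - q) ^ 2 ≤ bernKL p q := by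
  set g : ℝ → ℝ := fun x => -(p * log x) - (1 - p) * log (1 - x) - 2 * (p - x) ^ 2
  have hg : ∀ x ∈ Set.Ioo (0 : ℝ) 1,
      HasDerivAt g ((x - p) * (1 - 2 * x) ^ 2 / (x * (1 - x))) x := by
    intro x ⟨hx0, hx1⟩
    have hx1' : 1 - x ≠ 0 := by linarith
    refine ((((hasDerivAt_log hx0.ne').const_mul p).neg.sub
      ((((hasDerivAt_id x).const_sub 1).log hx1').const_mul (1 - p))).sub
      ((((hasDerivAt_id x).const_sub p).pow 2).const_mul 2)).congr_deriv ?_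
    simp only [id]
    field_simp
    ring
  have hIcc : Set.Icc q p ⊆ Set.Ioo 0 1 := fun x hx => ⟨hq0.trans_le hx.1, hx.2.trans_lt hp1⟩
  have hanti : AntitoneOn g (Set.Icc q p) := by
    refine antitoneOn_of_hasDerivWithinAt_nonpos (convex_Icc q p)
      (fun x hx => (hg x (hIcc hx)).continuousAt.continuousWithinAt)
      (fun x hx => (hg x (hIcc (interior_subset hx))).hasDerivWithinAt) ?_
    rw [interior_Icc]
    intro x ⟨hqx, hxp⟩
    have hx1 : 0 < 1 - x := by linarith
    exact div_nonpos_of_nonpos_of_nonneg (mul_nonpos_of_nonpos_of_nonneg (by linarith)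
      (sq_nonneg _)) (mul_nonneg (hq0.trans hqx).le hx1.le)
  have hgqp := hanti ⟨le_rfl, hqp⟩ ⟨hqp, le_rfl⟩ hqp
  have hp0 : 0 < p := hq0.trans_le hqp
  have hq1 : 0 < 1 - q := by linarith
  have hp1' : 0 < 1 - p := by linarith
  have hKL : bernKL p q = g q - g p + 2 * (p - q) ^ 2 := by
    simp only [bernKL, g, log_div hp0.ne' hq0.ne', log_div hp1'.ne' hq1.ne']
    ring
  linarith

lemma bernKL_one_sub (p q : ℝ) : bernKL (1 - p) (1 - q) = bernKL p q := by
  simp only [bernKL, sub_sub_cancel]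
  ring

lemma two_mul_sq_sub_le_bernKL {p q : ℝ} (hp0 : 0 < p) (hp1 : p < 1) (hq0 : 0 < q)
    (hq1 : q < 1) : 2 * (p - q) ^ 2 ≤ bernKL p q := by
  rcases le_total q p with hqp | hpq
  · exact two_mul_sq_sub_le_bernKL_of_le hq0 hqp hp1
  · have := two_mul_sq_sub_le_bernKL_of_le (p := 1 - p) (q := 1 - q) (by linarith)
      (by linarith) (by linarith)
    rw [bernKL_one_sub] at this
    linarith

/-- The log-sum inequality. -/
lemma mul_log_sum_div_sum_le_finKL {α : Type*} {A : Finset α} {p q : α → ℝ}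
    (hp : ∀ s ∈ A, 0 < p s) (hq : ∀ s ∈ A, 0 < q s) :
    (∑ s ∈ A, p s) * log ((∑ s ∈ A, p s) / ∑ s ∈ A, q s) ≤ finKL A p q := by
  obtain rfl | hA := A.eq_empty_or_nonempty
  · simp [finKL]
  set P := ∑ s ∈ A, p s
  set Q := ∑ s ∈ A, q s
  have hP : 0 < P := sum_pos hp hA
  have hQ : 0 < Q := sum_pos hq hA
  have hterm : ∀ s ∈ A, p s - q s * (P / Q) ≤ p s * log (p s / q s) - p s * log (P / Q) := by
    intro s hs
    have hps := hp s hs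
    have hqs := hq s hs
    have hlog := one_sub_inv_le_log_of_pos (show 0 < (p s / q s) / (P / Q) by positivity)
    rw [log_div (by positivity) (by positivity)] at hlog
    have := mul_le_mul_of_nonneg_left hlog hps.le
    have e : p s * (1 - ((p s / q s) / (P / Q))⁻¹) = p s - q s * (P / Q) := by
      field_simp
    linarith
  have hsum := sum_le_sum hterm
  rw [sum_sub_distrib, sum_sub_distrib, ← sum_mul, ← sum_mul,
    show Q * (P / Q) = P by field_simp] at hsum
  unfold finKL
  linarith

/-- Pinsker's inequality. -/
lemma sum_abs_sub_le_sqrt_two_mul_finKL {α : Type*} {V : Finset α} {p q : α → ℝ}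
    (hp : ∀ s ∈ V, 0 < p s) (hq : ∀ s ∈ V, 0 < q s)
    (hp1 : ∑ s ∈ V, p s = 1) (hq1 : ∑ s ∈ V, q s = 1) :
    ∑ s ∈ V, |p s - q s| ≤ √(2 * finKL V p q) := by
  classical
  set A := V.filter (fun s => q s < p s)
  set B := V.filter (fun s => ¬ q s < p s)
  have hAV : A ⊆ V := filter_subset _ _
  have hBV : B ⊆ V := filter_subset _ _
  set δ := ∑ s ∈ A, p s - ∑ s ∈ A, q s
  have hpAB : ∑ s ∈ A, p s + ∑ s ∈ B, p s = 1 := by rw [sum_filter_add_sum_filter_not, hp1]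
  have hqAB : ∑ s ∈ A, q s + ∑ s ∈ B, q s = 1 := by rw [sum_filter_add_sum_filter_not, hq1]
  -- the total variation is carried by the event `A = {q < p}`
  have hTV : ∑ s ∈ V, |p s - q s| = 2 * δ := by
    rw [← sum_filter_add_sum_filter_not V (fun s => q s < p s)]
    have eA : ∀ s ∈ A, |p s - q s| = p s - q s := fun s hs =>
      abs_of_pos (sub_pos.2 (mem_filter.1 hs).2)
    have eB : ∀ s ∈ B, |p s - q s| = q s - p s := fun s hs => by
      rw [abs_sub_comm]; exact abs_of_nonneg (sub_nonneg.2 (not_lt.1 (mem_filter.1 hs).2))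
    rw [sum_congr rfl eA, sum_congr rfl eB, sum_sub_distrib, sum_sub_distrib]
    linarith
  rw [hTV]
  rcases le_or_gt δ 0 with hδ | hδ
  · exact (mul_nonpos_of_nonneg_of_nonpos zero_le_two hδ).trans (sqrt_nonneg _)
  have hA : A.Nonempty := nonempty_of_sum_ne_zero (s := A) (f := p)
    (by linarith [sum_nonneg fun s hs => (hq s (hAV hs)).le])
  have hB : B.Nonempty := nonempty_of_sum_ne_zero (s := B) (f := q)
    (by linarith [sum_nonneg fun s hs => (hp s (hBV hs)).le])
  have hpA := sum_pos (fun s hs => hp s (hAV hs)) hA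
  have hqA := sum_pos (fun s hs => hq s (hAV hs)) hA
  have hpB := sum_pos (fun s hs => hp s (hBV hs)) hB
  have hqB := sum_pos (fun s hs => hq s (hBV hs)) hB
  have hKL : 2 * δ ^ 2 ≤ finKL V p q :=
    calc 2 * δ ^ 2 ≤ bernKL (∑ s ∈ A, p s) (∑ s ∈ A, q s) :=
          two_mul_sq_sub_le_bernKL hpA (by linarith) hqA (by linarith)
      _ ≤ finKL A p q + finKL B p q := by
          have hA := mul_log_sum_div_sum_le_finKL (fun s hs => hp s (hAV hs))
            (fun s hs => hq s (hAV hs))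
          have hB := mul_log_sum_div_sum_le_finKL (fun s hs => hp s (hBV hs))
            (fun s hs => hq s (hBV hs))
          rw [show ∑ s ∈ B, p s = 1 - ∑ s ∈ A, p s by linarith,
            show ∑ s ∈ B, q s = 1 - ∑ s ∈ A, q s by linarith] at hB
          unfold bernKL
          linarith
      _ = finKL V p q := sum_filter_add_sum_filter_not _ _ _
  rw [← sqrt_sq (by linarith : 0 ≤ 2 * δ)]
  exact sqrt_le_sqrt (by nlinarith)

lemma sum_mul_sub_sum_mul_le {α : Type*} {V : Finset α} {p q f : α → ℝ} {M : ℝ}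
    (hf : ∀ s ∈ V, 0 ≤ f s ∧ f s ≤ M) (hpq : ∑ s ∈ V, p s = ∑ s ∈ V, q s) :
    ∑ s ∈ V, p s * f s - ∑ s ∈ V, q s * f s ≤ M / 2 * ∑ s ∈ V, |p s - q s| := by
  -- center `f` at `M / 2`, which the equal total masses do not see
  have hcenter : ∑ s ∈ V, p s * f s - ∑ s ∈ V, q s * f s
      = ∑ s ∈ V, (p s - q s) * (f s - M / 2) := by
    rw [← sum_sub_distrib]
    simp only [sub_mul, mul_sub, sum_sub_distrib, ← sum_mul, hpq]
    ring
  rw [hcenter, mul_sum]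
  refine sum_le_sum fun s hs => ?_
  have hfs : |f s - M / 2| ≤ M / 2 := abs_le.2 ⟨by linarith [hf s hs], by linarith [hf s hs]⟩
  calc (p s - q s) * (f s - M / 2) ≤ |p s - q s| * |f s - M / 2| := by
        rw [← abs_mul]; exact le_abs_self _
    _ ≤ M / 2 * |p s - q s| := by
        rw [mul_comm]; exact mul_le_mul_of_nonneg_right hfs (abs_nonneg _)

lemma sum_mul_le_sum_mul_add_sqrt_finKL {α : Type*} {V : Finset α} {p q f : α → ℝ} {M : ℝ}
    (hp : ∀ s ∈ V, 0 < p s) (hq : ∀ s ∈ V, 0 < q s)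
    (hp1 : ∑ s ∈ V, p s = 1) (hq1 : ∑ s ∈ V, q s = 1) (hf : ∀ s ∈ V, 0 ≤ f s ∧ f s ≤ M) :
    ∑ s ∈ V, q s * f s ≤ ∑ s ∈ V, p s * f s + M / 2 * √(2 * finKL V p q) := by
  obtain rfl | ⟨s, hs⟩ := V.eq_empty_or_nonempty
  · simp at hp1
  have hM : 0 ≤ M / 2 := by linarith [hf s hs]
  have hdiff := sum_mul_sub_sum_mul_le hf (hq1.trans hp1.symm)
  rw [sum_congr rfl fun s _ => abs_sub_comm (q s) (p s)] at hdiff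
  nlinarith [sum_abs_sub_le_sqrt_two_mul_finKL hp hq hp1 hq1]

lemma bernKL_half_half_add {t : ℝ} (ht : |t| < 1 / 2) :
    bernKL (1 / 2) (1 / 2 + t) = -(1 / 2) * log (1 - 4 * t ^ 2) := by
  obtain ⟨ht0, ht1⟩ := abs_lt.1 ht
  rw [bernKL, show 1 / 2 / (1 / 2 + t) = (1 + 2 * t)⁻¹ by field_simp,
    show (1 - 1 / 2) / (1 - (1 / 2 + t)) = (1 - 2 * t)⁻¹ by field_simp; ring,
    show 1 - 4 * t ^ 2 = (1 + 2 * t) * (1 - 2 * t) by ring,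
    log_mul (by linarith) (by linarith), log_inv, log_inv]
  ring

lemma bernKL_half_half_add_mul_le {ε s : ℝ} (hε0 : 0 < ε) (hε1 : ε < 1 / 2) (hs0 : 0 ≤ s)
    (hs1 : s ≤ 1) : bernKL (1 / 2) (1 / 2 + ε * s) ≤ s * (-(1 / 2) * log (1 - 4 * ε ^ 2)) := by
  have hεs : ε * s ≤ ε := mul_le_of_le_one_right hε0.le hs1
  have hεs0 : 0 ≤ ε * s := mul_nonneg hε0.le hs0
  rw [bernKL_half_half_add (abs_lt.2 ⟨by linarith, by linarith⟩)]
  have h4ε : 0 < 1 - 4 * ε ^ 2 := by nlinarith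
  -- concavity of `log` between `1 - 4ε²` and `1`
  have hconcave : s * log (1 - 4 * ε ^ 2) ≤ log (1 - 4 * ε ^ 2 * s) := by
    have := strictConcaveOn_log_Ioi.concaveOn.2 (Set.mem_Ioi.2 h4ε) (Set.mem_Ioi.2 one_pos)
      hs0 (sub_nonneg.2 hs1) (add_sub_cancel s 1)
    simp only [smul_eq_mul, log_one, mul_zero, add_zero] at this
    rwa [show 1 - 4 * ε ^ 2 * s = s * (1 - 4 * ε ^ 2) + (1 - s) * 1 by ring]
  have hmono : log (1 - 4 * ε ^ 2 * s) ≤ log (1 - 4 * (ε * s) ^ 2) :=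
    log_le_log (by nlinarith) (by nlinarith)
  linarith

def boolLists : ℕ → Finset (List Bool)
  | 0 => {[]}
  | n + 1 => (boolLists n).image (List.cons true) ∪ (boolLists n).image (List.cons false)

lemma length_of_mem_boolLists {n : ℕ} {s : List Bool} (hs : s ∈ boolLists n) :
    s.length = n := by
  induction n generalizing s with
  | zero => simp_all [boolLists]
  | succ n ih =>
    simp only [boolLists, mem_union, mem_image] at hs
    rcases hs with ⟨t, ht, rfl⟩ | ⟨t, ht, rfl⟩ <;> simp [ih ht]

lemma sum_boolLists_succ {M : Type*} [AddCommMonoid M] (n : ℕ) (g : List Bool → M) :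
    ∑ s ∈ boolLists (n + 1), g s = ∑ s ∈ boolLists n, (g (true :: s) + g (false :: s)) := by
  have hdisj : Disjoint ((boolLists n).image (List.cons true))
      ((boolLists n).image (List.cons false)) := by
    simp [disjoint_left]
  rw [boolLists, sum_union hdisj, sum_image (fun _ _ _ _ h => List.cons_injective h),
    sum_image (fun _ _ _ _ h => List.cons_injective h), sum_add_distrib]

noncomputable section

/-- `pathProb β h s` is the probability that the record `h` is continued by `s` when the next
value after any record `h'` is `Bernoulli(β h')`. -/
def pathProb (β : List Bool → ℝ) : List Bool → List Bool → ℝ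
  | _, [] => 1
  | h, b :: s => (if b then β h else 1 - β h) * pathProb β (h ++ [b]) s

/-- The probability that the value observed after the record `h` is `1`. -/
def meanReward {K : ℕ} (S : List Bool → Fin K → ℝ) (q : Fin K → ℝ) (h : List Bool) : ℝ :=
  ∑ a, S h a * q a

end

section PathProb

variable {β : List Bool → ℝ}

lemma sum_pathProb (n : ℕ) (h : List Bool) :
    ∑ s ∈ boolLists n, pathProb β h s = 1 := by
  induction n generalizing h with
  | zero => simp [boolLists, pathProb]
  | succ n ih =>
    simp only [sum_boolLists_succ, pathProb, if_true, Bool.false_eq_true, if_false,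
      sum_add_distrib, ← mul_sum, ih]
    ring

lemma pathProb_pos (hβ : ∀ h, 0 < β h ∧ β h < 1) (h s : List Bool) : 0 < pathProb β h s := by
  induction s generalizing h with
  | nil => simp [pathProb]
  | cons b s ih =>
    have := hβ h
    cases b <;> simp only [pathProb, if_true, Bool.false_eq_true, if_false] <;>
      exact mul_pos (by linarith) (ih _)

/-- Chain rule for the Kullback–Leibler divergence of path laws. -/
lemma finKL_pathProb_succ {γ : List Bool → ℝ} (hβ : ∀ h, 0 < β h ∧ β h < 1)
    (hγ : ∀ h, 0 < γ h ∧ γ h < 1) (n : ℕ) (h : List Bool) :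
    finKL (boolLists (n + 1)) (pathProb β h) (pathProb γ h)
      = bernKL (β h) (γ h)
        + β h * finKL (boolLists n) (pathProb β (h ++ [true])) (pathProb γ (h ++ [true]))
        + (1 - β h) * finKL (boolLists n) (pathProb β (h ++ [false]))
            (pathProb γ (h ++ [false])) := by
  obtain ⟨hβ0, hβ1⟩ := hβ h
  obtain ⟨hγ0, hγ1⟩ := hγ h
  have hstep : ∀ (b : Bool) (s : List Bool),
      pathProb β h (b :: s) * log (pathProb β h (b :: s) / pathProb γ h (b :: s))
        = (if b then β h else 1 - β h) * log ((if b then β h else 1 - β h)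
              / if b then γ h else 1 - γ h) * pathProb β (h ++ [b]) s
          + (if b then β h else 1 - β h) * (pathProb β (h ++ [b]) s
              * log (pathProb β (h ++ [b]) s / pathProb γ (h ++ [b]) s)) := by
    intro b s
    have hβs := pathProb_pos hβ (h ++ [b]) s
    have hγs := pathProb_pos hγ (h ++ [b]) s
    have hβb : 0 < if b then β h else 1 - β h := by split <;> linarith
    have hγb : 0 < if b then γ h else 1 - γ h := by split <;> linarith
    rw [pathProb, pathProb, mul_div_mul_comm, log_mul (by positivity) (by positivity)]
    ring
  simp only [finKL, sum_boolLists_succ, hstep, if_true, Bool.false_eq_true, if_false,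
    sum_add_distrib, ← mul_sum, sum_pathProb, bernKL]
  ring

end PathProb

section Strategy

variable {K : ℕ} {S : List Bool → Fin K → ℝ} {q : Fin K → ℝ}

lemma meanReward_const (hS1 : ∀ h, ∑ a, S h a = 1) (c : ℝ) :
    meanReward S (fun _ => c) = fun _ => c := by
  funext h
  rw [meanReward, ← sum_mul, hS1, one_mul]

lemma meanReward_ite (hS1 : ∀ h, ∑ a, S h a = 1) (i : Fin K) (c ε : ℝ) :
    meanReward S (fun a => if a = i then c + ε else c) = fun h => c + ε * S h i := by
  funext h
  have hsplit : ∀ a, S h a * (if a = i then c + ε else c)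
      = S h a * c + ε * if a = i then S h a else 0 := fun a => by split_ifs <;> ring
  simp only [meanReward, hsplit, sum_add_distrib, ← sum_mul, ← mul_sum, hS1, one_mul,
    sum_ite_eq', mem_univ, if_true]

lemma sum_mul_mix (hS1 : ∀ h, ∑ a, S h a = 1) (h : List Bool) (X Y : ℝ) :
    ∑ a, S h a * (q a * X + (1 - q a) * Y)
      = meanReward S q h * X + (1 - meanReward S q h) * Y := by
  simp only [meanReward, mul_add, ← mul_assoc, mul_one_sub, sum_add_distrib, ← sum_mul,
    sum_sub_distrib, hS1]

lemma obsExp_succ (hS1 : ∀ h, ∑ a, S h a = 1) (f : List Bool → ℝ) (r : ℕ) (h : List Bool) :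
    obsExp K q S f (r + 1) h = meanReward S q h * obsExp K q S f r (h ++ [true])
      + (1 - meanReward S q h) * obsExp K q S f r (h ++ [false]) := by
  rw [obsExp, sum_mul_mix hS1]

lemma obsCount_succ (hS1 : ∀ h, ∑ a, S h a = 1) (i : Fin K) (r : ℕ) (h : List Bool) :
    obsCount K q S i (r + 1) h = S h i + meanReward S q h * obsCount K q S i r (h ++ [true])
      + (1 - meanReward S q h) * obsCount K q S i r (h ++ [false]) := by
  have hsel : S h i = ∑ a, S h a * if a = i then 1 else 0 := by simp
  rw [obsCount, add_assoc, ← sum_mul_mix hS1, hsel, ← sum_add_distrib]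
  exact sum_congr rfl fun a _ => by ring

lemma obsExp_eq_sum_pathProb (hS1 : ∀ h, ∑ a, S h a = 1) (f : List Bool → ℝ) (r : ℕ)
    (h : List Bool) :
    obsExp K q S f r h = ∑ s ∈ boolLists r, pathProb (meanReward S q) h s * f (h ++ s) := by
  induction r generalizing h with
  | zero => simp [obsExp, boolLists, pathProb]
  | succ r ih =>
    simp only [obsExp_succ hS1, ih, sum_boolLists_succ, pathProb, if_true, Bool.false_eq_true,
      if_false, sum_add_distrib, mul_sum, List.append_assoc, List.cons_append, List.nil_append,
      mul_assoc]

lemma finKL_pathProb_le_mul_obsCount (hS1 : ∀ h, ∑ a, S h a = 1) {γ : List Bool → ℝ}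
    (hq : ∀ h, 0 < meanReward S q h ∧ meanReward S q h < 1) (hγ : ∀ h, 0 < γ h ∧ γ h < 1)
    (i : Fin K) {c : ℝ} (hstep : ∀ h, bernKL (meanReward S q h) (γ h) ≤ S h i * c) (r : ℕ)
    (h : List Bool) :
    finKL (boolLists r) (pathProb (meanReward S q) h) (pathProb γ h)
      ≤ c * obsCount K q S i r h := by
  induction r generalizing h with
  | zero => simp [finKL, boolLists, pathProb, obsCount]
  | succ r ih =>
    rw [finKL_pathProb_succ hq hγ, obsCount_succ hS1]
    have hT := mul_le_mul_of_nonneg_left (ih (h ++ [true])) (hq h).1.le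
    have hF := mul_le_mul_of_nonneg_left (ih (h ++ [false])) (sub_nonneg.2 (hq h).2.le)
    linarith [hstep h]

end Strategy

theorem observation_strategy_kl_bound_general (K T : ℕ)
    (i : Fin K) (ε : ℝ) (hε0 : 0 < ε) (hε1 : ε < 1 / 2)
    (S : List Bool → Fin K → ℝ)
    (hS0 : ∀ h a, 0 ≤ S h a) (hS1 : ∀ h, ∑ a, S h a = 1)
    (M : ℝ) (f : List Bool → ℝ)
    (hf : ∀ l : List Bool, l.length = T → 0 ≤ f l ∧ f l ≤ M) :
    obsExp K (fun a => if a = i then 1 / 2 + ε else 1 / 2) S f T [] ≤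
      obsExp K (fun _ => 1 / 2) S f T [] +
        M / 2 *
          Real.sqrt (-(obsCount K (fun _ => 1 / 2) S i T []) *
            Real.log (1 - 4 * ε ^ 2)) := by
  have hSi : ∀ h, 0 ≤ S h i ∧ S h i ≤ 1 := fun h =>
    ⟨hS0 h i, hS1 h ▸ single_le_sum (fun a _ => hS0 h a) (mem_univ i)⟩
  have hbias : ∀ h, 0 < 1 / 2 + ε * S h i ∧ 1 / 2 + ε * S h i < 1 := fun h => by
    constructor <;> nlinarith [hSi h]
  have hunif := meanReward_const hS1 (1 / 2)
  have hKL := finKL_pathProb_le_mul_obsCount (q := fun _ => 1 / 2) hS1 (by norm_num [hunif])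
    hbias i (fun h => by rw [hunif]; exact bernKL_half_half_add_mul_le hε0 hε1 (hSi h).1 (hSi h).2)
    T []
  rw [hunif] at hKL
  have hM : 0 ≤ M := by
    obtain ⟨h0, hM⟩ := hf (List.replicate T true) List.length_replicate
    exact h0.trans hM
  rw [obsExp_eq_sum_pathProb hS1, obsExp_eq_sum_pathProb hS1, meanReward_ite hS1, hunif]
  simp only [List.nil_append]
  calc _ ≤ _ + M / 2 * √(2 * finKL (boolLists T) (pathProb (fun _ => 1 / 2) [])
        (pathProb (fun h => 1 / 2 + ε * S h i) [])) :=
      sum_mul_le_sum_mul_add_sqrt_finKL (fun s _ => pathProb_pos (by norm_num) [] s)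
        (fun s _ => pathProb_pos hbias [] s) (sum_pathProb _ _) (sum_pathProb _ _)
        (fun s hs => hf s (length_of_mem_boolLists hs))
    _ ≤ _ := by
      gcongr _ + _ * √?_
      linarith

/-- under the law `P_i` the observed value at a round where
action `i` is selected is `Bernoulli(1/2+ε)` and at any other round
`Bernoulli(1/2)`; under `P_unif` every observed value is `Bernoulli(1/2)`.
For any function `f` of the sequence of observed rewards with values in
`[0,M]`,
`E_i[f(r)] ≤ E_unif[f(r)] + (M/2)·√(−E_unif[N_i]·ln(1−4ε²))`,
where `N_i` is the number of rounds at which action `i` is selected. -/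
theorem observation_strategy_kl_bound (K T : ℕ) (hK : 2 ≤ K) (hT : 1 ≤ T)
    (i : Fin K) (ε : ℝ) (hε0 : 0 < ε) (hε1 : ε < 1 / 2)
    (S : List Bool → Fin K → ℝ)
    (hS0 : ∀ h a, 0 ≤ S h a) (hS1 : ∀ h, ∑ a, S h a = 1)
    (M : ℝ) (f : List Bool → ℝ)
    (hf : ∀ l : List Bool, l.length = T → 0 ≤ f l ∧ f l ≤ M) :
    obsExp K (fun a => if a = i then 1 / 2 + ε else 1 / 2) S f T [] ≤
      obsExp K (fun _ => 1 / 2) S f T [] +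
        M / 2 *
          Real.sqrt (-(obsCount K (fun _ => 1 / 2) S i T []) *
            Real.log (1 - 4 * ε ^ 2)) :=
  observation_strategy_kl_bound_general K T i ε hε0 hε1 S hS0 hS1 M f hf
end

section
/- For every real number x ≤ 1, one has exp(x) ≤ 1 + x + (e−2)·x², where e is Euler's number. -/
/-!
For `|x| ≤ 1` the tail `∑ x ^ (n + 2) / (n + 2)!` of the exponential series is bounded termwise
by `x ^ 2 ∑ 1 / (n + 2)! = (e - 2) x ^ 2`. For `x ≤ -1`, `exp x ≤ e⁻¹ ≤ e - 2`, and the quadratic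
`1 + x + (e - 2) x ^ 2` is at least `e - 2` there.
-/

open Real Nat

lemma hasSum_exp_sub_one_sub (x : ℝ) :
    HasSum (fun n : ℕ ↦ x ^ (n + 2) / (n + 2)!) (exp x - 1 - x) := by
  simpa [Finset.sum_range_succ, ← exp_eq_exp_ℝ, sub_sub] using
    (hasSum_nat_add_iff' 2).mpr (NormedSpace.expSeries_div_hasSum_exp x)

lemma pow_add_two_le_sq_of_abs_le_one {x : ℝ} (hx : |x| ≤ 1) (n : ℕ) : x ^ (n + 2) ≤ x ^ 2 :=
  calc x ^ (n + 2) ≤ |x| ^ (n + 2) := (le_abs_self _).trans (abs_pow x _).le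
    _ ≤ |x| ^ 2 := pow_le_pow_of_le_one (abs_nonneg x) hx (by omega)
    _ = x ^ 2 := sq_abs x

lemma exp_le_one_add_add_sq_of_abs_le_one {x : ℝ} (hx : |x| ≤ 1) :
    exp x ≤ 1 + x + (exp 1 - 2) * x ^ 2 := by
  have h := hasSum_le (fun n ↦ ?_) (hasSum_exp_sub_one_sub x)
    ((hasSum_exp_sub_one_sub 1).mul_left (x ^ 2))
  · linarith
  · rw [one_pow, mul_one_div]
    exact div_le_div_of_nonneg_right (pow_add_two_le_sq_of_abs_le_one hx n) (by positivity)

lemma exp_neg_one_le_exp_one_sub_two : exp (-1) ≤ exp 1 - 2 := by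
  rw [exp_neg, inv_le_iff_one_le_mul₀ (exp_pos 1)]
  nlinarith [exp_one_gt_d9]

lemma exp_le_one_add_add_sq_of_le_neg_one {x : ℝ} (hx : x ≤ -1) :
    exp x ≤ 1 + x + (exp 1 - 2) * x ^ 2 := by
  have hc : 1 / 2 < exp 1 - 2 := by linarith [exp_one_gt_d9]
  -- `1 + x + c x² - c = (x + 1) (c (x - 1) + 1)`, a product of two nonpositive factors.
  have hquad : exp 1 - 2 ≤ 1 + x + (exp 1 - 2) * x ^ 2 := by
    nlinarith [mul_nonneg_of_nonpos_of_nonpos (show x + 1 ≤ 0 by linarith)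
      (show (exp 1 - 2) * (x - 1) + 1 ≤ 0 by nlinarith)]
  calc exp x ≤ exp (-1) := exp_le_exp.mpr hx
    _ ≤ exp 1 - 2 := exp_neg_one_le_exp_one_sub_two
    _ ≤ 1 + x + (exp 1 - 2) * x ^ 2 := hquad

/-- For every real number `x ≤ 1`,
`exp x ≤ 1 + x + (e − 2)·x²`, where `e` is Euler's number. -/
theorem exp_le_one_add_add_sq (x : ℝ) (hx : x ≤ 1) :
    Real.exp x ≤ 1 + x + (Real.exp 1 - 2) * x ^ 2 := by
  rcases le_or_gt x (-1) with hx' | hx'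
  · exact exp_le_one_add_add_sq_of_le_neg_one hx'
  · exact exp_le_one_add_add_sq_of_abs_le_one (abs_le.mpr ⟨hx'.le, hx⟩)
end
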